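/- Let T be a tree on ℕ and let X be a fixed point of Γ_T. Suppose g : ℕ → ℕ satisfies g↾n ∈ T ∖ X for every n, and g is lexicographically least with this property (for every h' : ℕ → ℕ with h'↾n ∈ T ∖ X for all n, g ≤_l h'). If h is a path of T with h <_l g, then X ∖ {h↾n : n ∈ ℕ} is a fixed point of Γ_T that is strictly contained in X. -/
import Mathlib


/-- A tree on ℕ: a set of finite sequences closed under taking initial segments. -/
def IsTree (T : Set (List ℕ)) : Prop :=
  ∀ σ ∈ T, ∀ τ : List ℕ, τ <+: σ → τ ∈ T

/-- `SX X` = the set of sequences having some element of `X` as an initial segment. -/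
def SX (X : Set (List ℕ)) : Set (List ℕ) :=
  {σ | ∃ τ ∈ X, τ <+: σ}

/-- `σ` is an endnode of `A` if `σ ∈ A` and no one-step extension of `σ` is in `A`. -/
def IsEndnode (A : Set (List ℕ)) (σ : List ℕ) : Prop :=
  σ ∈ A ∧ ∀ n : ℕ, σ ++ [n] ∉ A

/-- The operator `Γ_T`. -/
def Gam (T X : Set (List ℕ)) : Set (List ℕ) :=
  SX X ∪ {σ | ∃ τ : List ℕ, τ <+: σ ∧ IsEndnode (T \ SX X) τ}

/-- `restrict f n = [f 0, …, f (n-1)]`. -/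
def restrict (f : ℕ → ℕ) (n : ℕ) : List ℕ :=
  List.ofFn fun i : Fin n => f i

/-- `f` is a path of the tree `T`. -/
def IsPath (T : Set (List ℕ)) (f : ℕ → ℕ) : Prop :=
  ∀ n, restrict f n ∈ T

/-- `f` is lexicographically smaller than `g`. -/
def LexLt (f g : ℕ → ℕ) : Prop :=
  ∃ n, restrict f n = restrict g n ∧ f n < g n

/-- `f = g` or `f <_l g`. -/
def LexLe (f g : ℕ → ℕ) : Prop := f = g ∨ LexLt f g

lemma restrict_length (f : ℕ → ℕ) (n : ℕ) : (restrict f n).length = n := by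
  simp [restrict]

lemma restrict_eq_entries {f g : ℕ → ℕ} {n : ℕ} (hfg : restrict f n = restrict g n) :
    ∀ k, k < n → f k = g k := by
  intro k hk
  have h1 : (restrict f n)[k]'(by simp [restrict_length, hk]) =
      (restrict g n)[k]'(by simp [restrict_length, hk]) :=
    List.getElem_of_eq hfg _
  simpa [restrict] using h1

lemma restrict_succ (f : ℕ → ℕ) (m : ℕ) :
    restrict f (m + 1) = restrict f m ++ [f m] := by
  rw [restrict, List.ofFn_succ']
  simp [restrict, List.concat_eq_append, Fin.coe_castSucc, Fin.val_last]

lemma prefix_restrict {τ : List ℕ} {f : ℕ → ℕ} {m : ℕ} (hp : τ <+: restrict f m) :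
    τ = restrict f τ.length := by
  have hlen : τ.length ≤ m := by
    have := hp.length_le
    simpa [restrict_length] using this
  apply List.ext_getElem
  · simp [restrict_length]
  · intro i h1 h2
    obtain ⟨t, ht⟩ := hp
    have h3 : i < (τ ++ t).length := by simp; omega
    have e1 : (τ ++ t)[i]'h3 = τ[i]'h1 := List.getElem_append_left _
    have e2 : (τ ++ t)[i]'h3 = (restrict f m)[i]'(by simp [restrict_length]; omega) :=
      List.getElem_of_eq ht h3
    rw [← e1, e2]
    simp [restrict]

lemma lexLt_asymm {f g : ℕ → ℕ} (h1 : LexLt f g) (h2 : LexLt g f) : False := by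
  obtain ⟨n, hn, hn'⟩ := h1
  obtain ⟨m, hm, hm'⟩ := h2
  rcases lt_trichotomy n m with hc | hc | hc
  · have := restrict_eq_entries hm n hc
    omega
  · subst hc; omega
  · have := restrict_eq_entries hn m hc
    omega

theorem stmt4 (T : Set (List ℕ)) (hT : IsTree T) (X : Set (List ℕ))
    (hX : Gam T X = X) (g : ℕ → ℕ)
    (hg : ∀ n, restrict g n ∈ T \ X)
    (hgmin : ∀ h' : ℕ → ℕ, (∀ n, restrict h' n ∈ T \ X) → LexLe g h')
    (h : ℕ → ℕ) (hh : IsPath T h) (hlt : LexLt h g) :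
    Gam T (X \ Set.range (restrict h)) = X \ Set.range (restrict h) ∧
    X \ Set.range (restrict h) ⊂ X := by
  set R := Set.range (restrict h) with hR
  set X' := X \ R with hX'
  -- SX X = X
  have hSX : SX X = X := by
    apply Set.Subset.antisymm
    · intro σ hσ
      rw [← hX]; exact Or.inl hσ
    · intro σ hσ
      exact ⟨σ, hσ, List.prefix_refl σ⟩
  -- no endnodes of T \ X
  have hNoEnd : ∀ τ, ¬ IsEndnode (T \ X) τ := by
    intro τ hτ
    have hτX : τ ∈ X := by
      rw [← hX]
      right
      exact ⟨τ, List.prefix_refl τ, by rwa [hSX]⟩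
    exact hτ.1.2 hτX
  -- SX X' = X'
  have hSX' : SX X' = X' := by
    apply Set.Subset.antisymm
    · rintro σ ⟨τ, ⟨hτX, hτR⟩, hp⟩
      constructor
      · rw [← hSX]; exact ⟨τ, hτX, hp⟩
      · rintro ⟨m, rfl⟩
        exact hτR ⟨τ.length, (prefix_restrict hp).symm⟩
    · intro σ hσ
      exact ⟨σ, hσ, List.prefix_refl σ⟩
  -- no endnodes of T \ X'
  have hNoEnd' : ∀ τ, ¬ IsEndnode (T \ X') τ := by
    rintro τ ⟨⟨hτT, hτX'⟩, hext⟩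
    by_cases hτR : τ ∈ R
    · obtain ⟨m, rfl⟩ := hτR
      refine hext (h m) ⟨?_, ?_⟩
      · rw [← restrict_succ]; exact hh (m + 1)
      · rintro ⟨_, hmem⟩
        exact hmem ⟨m + 1, restrict_succ h m⟩
    · have hτX : τ ∉ X := fun hx => hτX' ⟨hx, hτR⟩
      have := hNoEnd τ
      simp only [IsEndnode, not_and, not_forall, not_not] at this
      obtain ⟨n, hn⟩ := this ⟨hτT, hτX⟩
      exact hext n ⟨hn.1, fun hx => hn.2 hx.1⟩
  constructor
  · have : {σ | ∃ τ : List ℕ, τ <+: σ ∧ IsEndnode (T \ SX X') τ} = ∅ := by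
      ext σ
      simp only [Set.mem_setOf_eq, Set.mem_empty_iff_false, iff_false]
      rintro ⟨τ, _, hend⟩
      exact hNoEnd' τ (by rwa [hSX'] at hend)
    rw [Gam, this, Set.union_empty, hSX']
  · rw [Set.ssubset_iff_of_subset Set.diff_subset]
    have hnot : ¬ ∀ n, restrict h n ∈ T \ X := by
      intro hall
      rcases hgmin h hall with heq | hlt'
      · subst heq
        obtain ⟨n, _, hn⟩ := hlt
        omega
      · exact lexLt_asymm hlt hlt'
    push_neg at hnot
    obtain ⟨n, hn⟩ := hnot
    have hnT : restrict h n ∈ T := hh n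
    have hnX : restrict h n ∈ X := by
      by_contra hc
      exact hn ⟨hnT, hc⟩
    exact ⟨restrict h n, hnX, fun hx => hx.2 ⟨n, rfl⟩⟩
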